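/- The group Ĝ₃ of 3×3 matrices over ℤ/3 satisfying Lᵀ diag(1,-(-1),0) L = diag(1,1,0) and det L = 1 (i.e., with v = -1) has a commutator subgroup [Ĝ₃,Ĝ₃] of order 18, and the abelianization Ĝ₃/[Ĝ₃,Ĝ₃] is isomorphic to ℤ/2 × ℤ/2. -/

import Mathlib

/-!
Writing `L = [[A, 0], [r, c]]`, the isometry condition forces the third column of `L` to be
`(0, 0, c)`, because `x² + y²` is anisotropic over `𝔽₃` (`-1` is a non-square). Hence `A` lies in
`O₂(𝔽₃)`, the dihedral group of the eight signed permutation matrices, and `c = det A = ±1`.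
Sending `L` to the sign of `c` and to whether `A` is antidiagonal is a surjection onto the Klein
four-group; its kernel is the 18 matrices `diag(u, u, 1)` (`u = ±1`) with arbitrary bottom row.
That kernel consists of commutators: `diag(-1, -1, 1)` is the commutator of a quarter turn and a
reflection, and conjugating a translation by it inverts the translation, so in characteristic 3
every translation `t` equals `[diag(-1, -1, 1), t]`.
-/

open Matrix

/-- The group `Ĝ₃ = SO(3)₃ mod 3` (with `v = -1`, so `-v = 1`). -/
abbrev Ghat3 : Type :=
  {L : Matrix (Fin 3) (Fin 3) (ZMod 3) //
    Lᵀ * Matrix.diagonal ![1, 1, 0] * L = Matrix.diagonal ![1, 1, 0] ∧ L.det = 1}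

namespace Matrix

variable {n R : Type*} [Fintype n] [DecidableEq n] [CommRing R]

def specialIsometryGroup (J : Matrix n n R) : Subgroup (SpecialLinearGroup n R) where
  carrier := {A | (A : Matrix n n R)ᵀ * J * A = J}
  one_mem' := by simp
  mul_mem' {A B} hA hB := by
    simp only [Set.mem_ofPred_eq, SpecialLinearGroup.coe_mul] at hA hB ⊢
    calc _ = (B : Matrix n n R)ᵀ * ((A : Matrix n n R)ᵀ * J * A) * B := by
          rw [transpose_mul]; noncomm_ring
      _ = J := by rw [hA, hB]
  inv_mem' {A} (hA : (A : Matrix n n R)ᵀ * J * A = J) := by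
    set B : Matrix n n R := ↑(A⁻¹)
    have hAB : (A : Matrix n n R) * B = 1 := by
      rw [← SpecialLinearGroup.coe_mul, mul_inv_cancel, SpecialLinearGroup.coe_one]
    calc Bᵀ * J * B = Bᵀ * ((A : Matrix n n R)ᵀ * J * A) * B := by rw [hA]
      _ = ((A : Matrix n n R) * B)ᵀ * J * (A * B) := by rw [transpose_mul]; noncomm_ring
      _ = J := by rw [hAB]; simp

instance (J : Matrix n n R) : Group {L : Matrix n n R // Lᵀ * J * L = J ∧ L.det = 1} :=
  Equiv.group (β := specialIsometryGroup J)
    { toFun := fun L => ⟨⟨L.1, L.2.2⟩, L.2.1⟩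
      invFun := fun A => ⟨A.1.1, A.2, A.1.2⟩
      left_inv := fun _ => rfl
      right_inv := fun _ => rfl }

end Matrix

theorem eq_zero_and_eq_zero_of_mul_self_add_mul_self_eq_zero {K : Type*} [Field K]
    (hK : ¬IsSquare (-1 : K)) {a b : K} (h : a * a + b * b = 0) : a = 0 ∧ b = 0 := by
  by_cases hb : b = 0
  · simp_all
  · refine absurd ⟨a / b, ?_⟩ hK
    rw [div_mul_div_comm, eq_div_iff (mul_ne_zero hb hb)]
    linear_combination -h

open scoped commutatorElement in
theorem mem_commutator_of_mul_mul_eq {G : Type*} [Group G] {x a b : G}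
    (h : x * (b * a) = a * b) : x ∈ commutator G := by
  have hx : x = ⁅a, b⁆ := by
    rw [commutatorElement_def, ← h]; group
  rw [hx, commutator_def]
  exact Subgroup.commutator_mem_commutator (Subgroup.mem_top a) (Subgroup.mem_top b)

namespace Ghat3

theorem val_mul (L M : Ghat3) : (L * M).1 = L.1 * M.1 := rfl

theorem gram_apply (L : Ghat3) (i j : Fin 3) :
    L.1 0 i * L.1 0 j + L.1 1 i * L.1 1 j = diagonal ![1, 1, 0] i j := by
  have h := congrFun (congrFun L.2.1 i) j
  simp only [mul_apply, Fin.sum_univ_three, transpose_apply] at h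
  simpa [diagonal] using h

theorem val_zero_two_and_val_one_two (L : Ghat3) : L.1 0 2 = 0 ∧ L.1 1 2 = 0 :=
  eq_zero_and_eq_zero_of_mul_self_add_mul_self_eq_zero (by decide)
    (by simpa using L.gram_apply 2 2)

theorem det_val (L : Ghat3) : L.1.det = L.1 2 2 * (L.1 0 0 * L.1 1 1 - L.1 0 1 * L.1 1 0) := by
  obtain ⟨h02, h12⟩ := L.val_zero_two_and_val_one_two
  rw [det_fin_three, h02, h12]; ring

theorem val_two_two_ne_zero (L : Ghat3) : L.1 2 2 ≠ 0 :=
  left_ne_zero_of_mul_eq_one (L.det_val ▸ L.2.2)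

theorem val_zero_zero_eq_zero_iff_val_one_zero_ne_zero (L : Ghat3) :
    L.1 0 0 = 0 ↔ L.1 1 0 ≠ 0 :=
  (by decide : ∀ a c : ZMod 3, a * a + c * c = 1 → (a = 0 ↔ c ≠ 0)) _ _
    (by simpa using L.gram_apply 0 0)

theorem val_zero_zero_eq_zero_iff_val_zero_one_ne_zero (L : Ghat3) :
    L.1 0 0 = 0 ↔ L.1 0 1 ≠ 0 :=
  (by decide : ∀ a b c d : ZMod 3, a * a + c * c = 1 → b * b + d * d = 1 → a * b + c * d = 0 →
    (a = 0 ↔ b ≠ 0)) _ _ _ _ (by simpa using L.gram_apply 0 0) (by simpa using L.gram_apply 1 1)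
    (by simpa using L.gram_apply 0 1)

theorem val_mul_two_two (L M : Ghat3) : (L * M).1 2 2 = L.1 2 2 * M.1 2 2 := by
  obtain ⟨h02, h12⟩ := M.val_zero_two_and_val_one_two
  simp [val_mul, mul_apply, Fin.sum_univ_three, h02, h12]

theorem val_mul_zero_zero (L M : Ghat3) :
    (L * M).1 0 0 = L.1 0 0 * M.1 0 0 + L.1 0 1 * M.1 1 0 := by
  simp [val_mul, mul_apply, Fin.sum_univ_three, L.val_zero_two_and_val_one_two.1]

def toKleinFour : Ghat3 →* Multiplicative (ZMod 2 × ZMod 2) :=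
  MonoidHom.mk' (fun L => .ofAdd (if L.1 2 2 = 1 then 0 else 1, if L.1 0 0 = 0 then 1 else 0))
    fun L M => by
      have corner : ∀ c c' : ZMod 3, c ≠ 0 → c' ≠ 0 →
          (if c * c' = 1 then (0 : ZMod 2) else 1) =
            (if c = 1 then 0 else 1) + (if c' = 1 then 0 else 1) := by
        decide
      have block : ∀ a b a' c' : ZMod 3, (a = 0 ↔ b ≠ 0) → (a' = 0 ↔ c' ≠ 0) →
          (if a * a' + b * c' = 0 then (1 : ZMod 2) else 0) =
            (if a = 0 then 1 else 0) + (if a' = 0 then 1 else 0) := by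
        decide
      rw [← ofAdd_add, Prod.mk_add_mk, val_mul_two_two, val_mul_zero_zero,
        corner _ _ L.val_two_two_ne_zero M.val_two_two_ne_zero,
        block _ _ _ _ L.val_zero_zero_eq_zero_iff_val_zero_one_ne_zero
          M.val_zero_zero_eq_zero_iff_val_one_zero_ne_zero]

theorem mem_ker_toKleinFour {L : Ghat3} : L ∈ toKleinFour.ker ↔ L.1 2 2 = 1 ∧ L.1 0 0 ≠ 0 := by
  simp [toKleinFour, MonoidHom.mem_ker, ← ofAdd_zero, Prod.ext_iff]

def translation (p q : ZMod 3) : Ghat3 :=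
  ⟨!![1, 0, 0; 0, 1, 0; p, q, 1], by revert p q; decide⟩

def planeScalar (u : (ZMod 3)ˣ) : Ghat3 :=
  ⟨!![(u : ZMod 3), 0, 0; 0, u, 0; 0, 0, 1], by revert u; decide⟩

def quarterTurn : Ghat3 := ⟨!![0, 1, 0; -1, 0, 0; 0, 0, 1], by decide⟩

def reflection : Ghat3 := ⟨!![1, 0, 0; 0, -1, 0; 0, 0, -1], by decide⟩

theorem planeScalar_mem_commutator (u : (ZMod 3)ˣ) : planeScalar u ∈ commutator Ghat3 := by
  obtain rfl | rfl := (by decide : ∀ u : (ZMod 3)ˣ, u = 1 ∨ u = -1) u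
  · rw [show planeScalar 1 = 1 from Subtype.ext (by decide)]
    exact one_mem _
  · exact mem_commutator_of_mul_mul_eq (a := quarterTurn) (b := reflection)
      (Subtype.ext (by decide))

theorem translation_mem_commutator (p q : ZMod 3) : translation p q ∈ commutator Ghat3 :=
  mem_commutator_of_mul_mul_eq (a := planeScalar (-1)) (b := translation p q)
    (Subtype.ext (by revert p q; decide))

def scalarTranslation (x : (ZMod 3)ˣ × ZMod 3 × ZMod 3) : Ghat3 :=
  planeScalar x.1 * translation x.2.1 x.2.2

theorem val_scalarTranslation (x : (ZMod 3)ˣ × ZMod 3 × ZMod 3) :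
    (scalarTranslation x).1 = !![(x.1 : ZMod 3), 0, 0; 0, x.1, 0; x.2.1, x.2.2, 1] := by
  revert x; decide

theorem scalarTranslation_injective : Function.Injective scalarTranslation := by
  rintro ⟨u, p, q⟩ ⟨u', p', q'⟩ h
  have h' := congrArg Subtype.val h
  rw [val_scalarTranslation, val_scalarTranslation] at h'
  have hu : (u : ZMod 3) = u' := congrFun (congrFun h' 0) 0
  have hp : p = p' := congrFun (congrFun h' 2) 0
  have hq : q = q' := congrFun (congrFun h' 2) 1
  rw [Units.ext hu, hp, hq]

theorem range_scalarTranslation : Set.range scalarTranslation = toKleinFour.ker := by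
  ext L
  refine ⟨?_, fun hL => ?_⟩
  · rintro ⟨x, rfl⟩
    rw [SetLike.mem_coe, mem_ker_toKleinFour, val_scalarTranslation]
    simp
  obtain ⟨h22, h00⟩ := mem_ker_toKleinFour.mp hL
  obtain ⟨h02, h12⟩ := L.val_zero_two_and_val_one_two
  have h01 := not_not.mp (mt L.val_zero_zero_eq_zero_iff_val_zero_one_ne_zero.mpr h00)
  have h10 := not_not.mp (mt L.val_zero_zero_eq_zero_iff_val_one_zero_ne_zero.mpr h00)
  have hsq : L.1 0 0 * L.1 0 0 = 1 := by simpa [h10] using L.gram_apply 0 0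
  have h11 : L.1 1 1 = L.1 0 0 := by
    have hdet := L.det_val ▸ L.2.2
    rw [h22, h01, h10] at hdet
    linear_combination L.1 0 0 * hdet - L.1 1 1 * hsq
  refine ⟨(Units.mk0 _ h00, L.1 2 0, L.1 2 1), Subtype.ext ?_⟩
  rw [val_scalarTranslation]
  ext i j
  fin_cases i <;> fin_cases j <;> simp [h01, h02, h10, h11, h12, h22]

theorem card_ker_toKleinFour : Nat.card toKleinFour.ker = 18 := by
  rw [← SetLike.coe_sort_coe, ← range_scalarTranslation,
    Nat.card_range_of_injective scalarTranslation_injective, Nat.card_eq_fintype_card]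
  decide

theorem ker_toKleinFour_le_commutator : toKleinFour.ker ≤ commutator Ghat3 := by
  intro L hL
  obtain ⟨⟨u, p, q⟩, rfl⟩ := (range_scalarTranslation ▸ hL : L ∈ Set.range scalarTranslation)
  exact mul_mem (planeScalar_mem_commutator u) (translation_mem_commutator p q)

theorem commutator_eq_ker_toKleinFour : commutator Ghat3 = toKleinFour.ker :=
  le_antisymm (Abelianization.commutator_subset_ker _) ker_toKleinFour_le_commutator

theorem toKleinFour_surjective : Function.Surjective toKleinFour := by
  intro z
  obtain ⟨L, -, hL⟩ := (by decide : ∀ z, ∃ L ∈ [1, reflection, quarterTurn, reflection * quarterTurn],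
    toKleinFour L = z) z
  exact ⟨L, hL⟩

end Ghat3

theorem Ghat3_commutator_abelianization :
    ∃ _ : Group Ghat3,
      (∀ x y : Ghat3, (x * y).val = x.val * y.val) ∧
      Nat.card (commutator Ghat3) = 18 ∧
      Nonempty (Abelianization Ghat3 ≃* Multiplicative (ZMod 2 × ZMod 2)) := by
  refine ⟨inferInstance, Ghat3.val_mul, ?_, ⟨?_⟩⟩
  · rw [Ghat3.commutator_eq_ker_toKleinFour, Ghat3.card_ker_toKleinFour]
  · exact (QuotientGroup.quotientMulEquivOfEq Ghat3.commutator_eq_ker_toKleinFour).trans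
      (QuotientGroup.quotientKerEquivOfSurjective _ Ghat3.toKleinFour_surjective)
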